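/- arXiv:1805.12229 — 2 statements merged into one kernel-verified Lean document; each statement's English description precedes it below -/
import Mathlib

section
/- Let A be an n×n symmetric F_2-matrix (viewed in F_4) with zero diagonal, and let ω be an element of F_4 satisfying ω^2 = ω + 1. Then any two rows of the matrix A + ωI are orthogonal under the trace inner product; in particular, the additive F_4-code generated by the rows of A + ωI is self-orthogonal. -/
/-!
In characteristic 2 the form `⟪x, y⟫ = ∑ₖ (xₖ yₖ² + xₖ² yₖ)` is biadditive and alternating, so it
suffices to check it on pairs of rows of `A + ωI`. Entries of `A` satisfy `a² = a`, which makes the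
rows of `A` mutually orthogonal; for `i ≠ j` the remaining cross terms are `Aᵢⱼ(ω + ω²)` and
`Aⱼᵢ(ω + ω²)`, which cancel because `A` is symmetric.
-/

open Finset

theorem AddMonoidHom.eq_zero_of_mem_closure {G H M : Type*} [AddGroup G] [AddGroup H]
    [AddCommGroup M] (B : G →+ H →+ M) {s : Set G} {t : Set H}
    (h : ∀ x ∈ s, ∀ y ∈ t, B x y = 0) :
    ∀ x ∈ AddSubgroup.closure s, ∀ y ∈ AddSubgroup.closure t, B x y = 0 := fun _ hx y hy =>
  (AddSubgroup.closure_le (B.flip y).ker).2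
    (fun x' hx' => (AddSubgroup.closure_le (B x').ker).2 (h x' hx') hy) hx

theorem charP_two_of_card_eq_four {F : Type*} [Field F] [Fintype F]
    (hF : Fintype.card F = 4) : CharP F 2 := by
  have h4 : ((4 : ℕ) : F) = 0 := hF ▸ FiniteField.cast_card_eq_zero F
  refine CharTwo.of_one_ne_zero_of_two_eq_zero one_ne_zero (mul_self_eq_zero.mp ?_)
  norm_num at h4 ⊢
  linear_combination h4

theorem Matrix.add_smul_one_eq_add_single {ι α : Type*} [DecidableEq ι] [NonAssocSemiring α]
    (A : Matrix ι ι α) (c : α) (i : ι) : (A + c • (1 : Matrix ι ι α)) i = A i + Pi.single i c := by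
  ext k
  simp [Matrix.one_apply, Pi.single_apply, eq_comm]

namespace CharTwo

variable {R ι : Type*} [CommRing R] [CharP R 2] [Fintype ι]

def traceForm : (ι → R) →+ (ι → R) →+ R :=
  AddMonoidHom.mk'
    (fun x => AddMonoidHom.mk' (fun y => ∑ k, (x k * y k ^ 2 + x k ^ 2 * y k)) fun y y' => by
      simp only [Pi.add_apply, add_sq, ← sum_add_distrib]
      exact sum_congr rfl fun k _ => by ring)
    fun x x' => AddMonoidHom.ext fun y => by
      simp only [AddMonoidHom.mk'_apply, AddMonoidHom.add_apply, Pi.add_apply, add_sq,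
        ← sum_add_distrib]
      exact sum_congr rfl fun k _ => by ring

theorem traceForm_apply (x y : ι → R) :
    traceForm x y = ∑ k, (x k * y k ^ 2 + x k ^ 2 * y k) := rfl

theorem traceForm_comm (x y : ι → R) : traceForm x y = traceForm y x := by
  simp only [traceForm_apply, add_comm, mul_comm]

theorem traceForm_self (x : ι → R) : traceForm x x = 0 := by
  simp [traceForm_apply, ← pow_succ, ← pow_succ', add_self_eq_zero]

theorem traceForm_eq_zero_of_isIdempotentElem {x y : ι → R}
    (hx : ∀ k, IsIdempotentElem (x k)) (hy : ∀ k, IsIdempotentElem (y k)) :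
    traceForm x y = 0 := by
  simp [traceForm_apply, sq, (hx _).eq, (hy _).eq, add_self_eq_zero]

theorem traceForm_single_left [DecidableEq ι] (i : ι) (c : R) (y : ι → R) :
    traceForm (Pi.single i c) y = c * y i ^ 2 + c ^ 2 * y i := by
  rw [traceForm_apply, Fintype.sum_eq_single i fun k hk => by simp [hk]]
  simp

theorem traceForm_single_right [DecidableEq ι] (x : ι → R) (j : ι) (c : R) :
    traceForm x (Pi.single j c) = c * x j ^ 2 + c ^ 2 * x j := by
  rw [traceForm_comm, traceForm_single_left]

theorem traceForm_add_smul_one_rows [DecidableEq ι] {A : Matrix ι ι R} (hA : A.IsSymm)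
    (hidem : ∀ i j, IsIdempotentElem (A i j)) (c : R) (i j : ι) :
    traceForm ((A + c • (1 : Matrix ι ι R)) i) ((A + c • (1 : Matrix ι ι R)) j) = 0 := by
  rcases eq_or_ne i j with rfl | hij
  · exact traceForm_self _
  simp only [Matrix.add_smul_one_eq_add_single, map_add, AddMonoidHom.add_apply,
    traceForm_eq_zero_of_isIdempotentElem (hidem i) (hidem j), traceForm_single_left,
    traceForm_single_right, hA.apply i j]
  simp [hij, add_self_eq_zero]

end CharTwo

theorem rows_self_orthogonal_general {F : Type*} [Field F] [Fintype F]
    (hF : Fintype.card F = 4) (ω : F)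
    {n : ℕ} (A : Matrix (Fin n) (Fin n) F)
    (h01 : ∀ i j, A i j = 0 ∨ A i j = 1)
    (hsymm : A.IsSymm) :
    (∀ i j : Fin n,
      ∑ k, ((A + ω • (1 : Matrix (Fin n) (Fin n) F)) i k *
              ((A + ω • (1 : Matrix (Fin n) (Fin n) F)) j k) ^ 2 +
            ((A + ω • (1 : Matrix (Fin n) (Fin n) F)) i k) ^ 2 *
              (A + ω • (1 : Matrix (Fin n) (Fin n) F)) j k) = 0) ∧
    (∀ x ∈ AddSubgroup.closure
        (Set.range fun i => fun k => (A + ω • (1 : Matrix (Fin n) (Fin n) F)) i k),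
      ∀ y ∈ AddSubgroup.closure
        (Set.range fun i => fun k => (A + ω • (1 : Matrix (Fin n) (Fin n) F)) i k),
      ∑ k, (x k * y k ^ 2 + x k ^ 2 * y k) = 0) := by
  have := charP_two_of_card_eq_four hF
  have hidem : ∀ i j, IsIdempotentElem (A i j) := fun i j =>
    (h01 i j).elim (fun h => h ▸ .zero) (fun h => h ▸ .one)
  have hrows := CharTwo.traceForm_add_smul_one_rows hsymm hidem ω
  refine ⟨hrows, (CharTwo.traceForm (R := F) (ι := Fin n)).eq_zero_of_mem_closure ?_⟩
  rintro _ ⟨i, rfl⟩ _ ⟨j, rfl⟩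
  exact hrows i j

/-- The rows of `A + ωI` are pairwise orthogonal under the trace inner product,
and the additive code they generate (the set of `F_2`-linear combinations of
the rows, i.e. sums of subsets of the rows) is self-orthogonal. -/
theorem rows_self_orthogonal {F : Type*} [Field F] [Fintype F]
    (hF : Fintype.card F = 4) (ω : F) (hω : ω ^ 2 = ω + 1)
    {n : ℕ} (A : Matrix (Fin n) (Fin n) F)
    (h01 : ∀ i j, A i j = 0 ∨ A i j = 1)
    (hsymm : A.IsSymm) (hdiag : ∀ i, A i i = 0) :
    (∀ i j : Fin n,
      ∑ k, ((A + ω • (1 : Matrix (Fin n) (Fin n) F)) i k *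
              ((A + ω • (1 : Matrix (Fin n) (Fin n) F)) j k) ^ 2 +
            ((A + ω • (1 : Matrix (Fin n) (Fin n) F)) i k) ^ 2 *
              (A + ω • (1 : Matrix (Fin n) (Fin n) F)) j k) = 0) ∧
    (∀ x ∈ AddSubgroup.closure
        (Set.range fun i => fun k => (A + ω • (1 : Matrix (Fin n) (Fin n) F)) i k),
      ∀ y ∈ AddSubgroup.closure
        (Set.range fun i => fun k => (A + ω • (1 : Matrix (Fin n) (Fin n) F)) i k),
      ∑ k, (x k * y k ^ 2 + x k ^ 2 * y k) = 0) :=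
  rows_self_orthogonal_general hF ω A h01 hsymm
end

section
/- Let A be an n×n symmetric (0,1)-matrix with zero diagonal over F_4 and ω in F_4 with ω^2 = ω + 1. Then the rows of A + ωI are linearly independent over F_2, so the additive F_4-code they generate has exactly 2^n codewords. -/
/-- The rows of `A + ωI` are linearly independent over `F_2` (no nonempty subset
of rows sums to zero), so the additive code they generate has `2^n` codewords. -/
theorem rows_independent_card {F : Type*} [Field F] [Fintype F]
    (hF : Fintype.card F = 4) (ω : F) (hω : ω ^ 2 = ω + 1)
    {n : ℕ} (A : Matrix (Fin n) (Fin n) F)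
    (h01 : ∀ i j, A i j = 0 ∨ A i j = 1)
    (hsymm : A.IsSymm) (hdiag : ∀ i, A i i = 0) :
    (∀ S : Finset (Fin n),
      (∑ i ∈ S, fun k => (A + ω • (1 : Matrix (Fin n) (Fin n) F)) i k) = 0 →
        S = ∅) ∧
    Set.ncard {x : Fin n → F | ∃ S : Finset (Fin n),
        x = ∑ i ∈ S, fun k => (A + ω • (1 : Matrix (Fin n) (Fin n) F)) i k} =
      2 ^ n := by
  classical
  -- characteristic 2
  have hp : Nat.Prime (ringChar F) := CharP.char_is_prime F (ringChar F)
  haveI : Fact (Nat.Prime 2) := ⟨Nat.prime_two⟩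
  have hdvd : 2 ∣ ringChar F := by
    rw [prime_dvd_char_iff_dvd_card, hF]; norm_num
  have hchar : ringChar F = 2 :=
    ((Nat.prime_dvd_prime_iff_eq Nat.prime_two hp).mp hdvd).symm
  have h2 : (2 : F) = 0 := by
    have := ringChar.Nat.cast_ringChar (R := F)
    rw [hchar] at this; exact_mod_cast this
  have hadd : ∀ a : F, a + a = 0 := by
    intro a; rw [← two_mul, h2, zero_mul]
  have hω0 : ω ≠ 0 := by
    intro h
    rw [h] at hω
    simp only [zero_pow, pow_two, mul_zero, zero_add] at hω
    exact one_ne_zero hω.symm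
  have hω1 : ω ≠ 1 := by
    intro h
    rw [h, one_pow] at hω
    have : (1 : F) = 0 := by rw [hω]; exact hadd 1
    exact one_ne_zero this
  -- sums of 0/1 entries are 0 or 1
  have hsum01 : ∀ (S : Finset (Fin n)) (g : Fin n → F), (∀ i, g i = 0 ∨ g i = 1) →
      (∑ i ∈ S, g i = 0 ∨ ∑ i ∈ S, g i = 1) := by
    intro S g hg
    induction S using Finset.induction with
    | empty => left; simp
    | @insert a s ha ih =>
      rw [Finset.sum_insert ha]
      rcases hg a with h0 | h1 <;> rcases ih with h0' | h1'
      · left; rw [h0, h0', add_zero]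
      · right; rw [h0, h1', zero_add]
      · right; rw [h1, h0', add_zero]
      · left; rw [h1, h1']; exact hadd 1
  -- first part
  have key : ∀ S : Finset (Fin n),
      (∑ i ∈ S, fun k => (A + ω • (1 : Matrix (Fin n) (Fin n) F)) i k) = 0 → S = ∅ := by
    intro S hS
    by_contra hne
    obtain ⟨k, hk⟩ := Finset.nonempty_iff_ne_empty.mpr hne
    have hk' := congrFun hS k
    rw [Finset.sum_apply, Pi.zero_apply] at hk'
    have expand : ∀ i ∈ S, (A + ω • (1 : Matrix (Fin n) (Fin n) F)) i k
        = A i k + ω * (if i = k then 1 else 0) := by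
      intro i _
      simp [Matrix.add_apply, Matrix.smul_apply, Matrix.one_apply, smul_eq_mul]
    rw [Finset.sum_congr rfl expand, Finset.sum_add_distrib] at hk'
    have hite : (∑ i ∈ S, ω * (if i = k then 1 else 0)) = ω := by
      simp [mul_ite, Finset.sum_ite_eq', hk]
    rw [hite] at hk'
    have hωeq : ω = ∑ i ∈ S, A i k := by
      have hx := hadd (∑ i ∈ S, A i k)
      calc ω = (∑ i ∈ S, A i k + ω) + ∑ i ∈ S, A i k := by
              rw [add_comm (∑ i ∈ S, A i k) ω, add_assoc, hx, add_zero]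
        _ = ∑ i ∈ S, A i k := by rw [hk', zero_add]
    rcases hsum01 S (fun i => A i k) (fun i => h01 i k) with h0 | h1
    · exact hω0 (hωeq.trans h0)
    · exact hω1 (hωeq.trans h1)
  refine ⟨key, ?_⟩
  set f : Finset (Fin n) → (Fin n → F) :=
    fun S => ∑ i ∈ S, fun k => (A + ω • (1 : Matrix (Fin n) (Fin n) F)) i k with hf
  have haddf : ∀ v : Fin n → F, v + v = 0 := by
    intro v; funext k; exact hadd (v k)
  have hinj : Function.Injective f := by
    intro S T hST
    have hdisj : Disjoint (symmDiff S T) (S ∩ T) := by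
      simpa [Finset.inf_eq_inter] using disjoint_symmDiff_inf S T
    have hsup : (symmDiff S T) ∪ (S ∩ T) = S ∪ T := by
      simpa [Finset.sup_eq_union, Finset.inf_eq_inter] using symmDiff_sup_inf S T
    have h1 : f (symmDiff S T) + f (S ∩ T) = f (S ∪ T) := by
      rw [hf]
      simp only
      rw [← Finset.sum_union hdisj, hsup]
    have h2' : f (S ∪ T) + f (S ∩ T) = f S + f T := by
      rw [hf]
      exact Finset.sum_union_inter
    have hzero : f (symmDiff S T) = 0 := by
      have hz : f (symmDiff S T) = f (S ∪ T) + f (S ∩ T) := by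
        rw [← h1, add_assoc, haddf, add_zero]
      rw [hz, h2', hST, haddf]
    have hbot : symmDiff S T = (⊥ : Finset (Fin n)) := key (symmDiff S T) hzero
    exact symmDiff_eq_bot.mp hbot
  have hset : {x : Fin n → F | ∃ S : Finset (Fin n), x = f S} = Set.range f := by
    ext x
    simp only [Set.mem_setOf_eq, Set.mem_range]
    exact ⟨fun ⟨S, h⟩ => ⟨S, h.symm⟩, fun ⟨S, h⟩ => ⟨S, h.symm⟩⟩
  rw [hset, ← Nat.card_coe_set_eq, Nat.card_range_of_injective hinj,
    Nat.card_eq_fintype_card, Fintype.card_finset, Fintype.card_fin]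
end
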